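/- arXiv:1603.09465 — 10 statements merged into one kernel-verified Lean document; each statement's English description precedes it below -/
import Mathlib

section
/- If R is an s-removal compatible program of P with respect to Q (i.e., R ⊆ P, R ∪ Q is consistent, and every R' with R ⊂ R' ⊆ P has R' ∪ Q inconsistent), then R is an s-compatible program of P with respect to Q (i.e., R ∪ Q is consistent and every R' with (P △ R') ⊂ (P △ R) has R' ∪ Q inconsistent), where △ denotes symmetric difference. -/
variable {α : Type*}

def sd (X Y : Set α) : Set α := (X \ Y) ∪ (Y \ X)

theorem stmt0 (Cons : Set α → Prop) (P Q R : Set α)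
    (h1 : R ⊆ P) (h2 : Cons (R ∪ Q))
    (h3 : ∀ R' : Set α, R ⊂ R' → R' ⊆ P → ¬ Cons (R' ∪ Q))
    (h4 : ∀ X : Set α, Cons (X ∪ Q) → Cons ((X ∩ P) ∪ Q)) :
    Cons (R ∪ Q) ∧ ∀ R' : Set α, sd P R' ⊂ sd P R → ¬ Cons (R' ∪ Q) := by
  refine ⟨h2, fun R' hss => ?_⟩
  have hsdR : sd P R = P \ R := by
    unfold sd
    have : R \ P = ∅ := by
      ext x; simp only [Set.mem_diff, Set.mem_empty_iff_false, iff_false, not_and, not_not]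
      exact fun hx => h1 hx
    rw [this, Set.union_empty]
  rw [hsdR] at hss
  have hsub := hss.1
  -- R' ⊆ P
  have hR'P : R' ⊆ P := by
    intro x hx
    by_contra hxP
    have : x ∈ P \ R := hsub (Or.inr ⟨hx, hxP⟩)
    exact hxP this.1
  -- R ⊆ R'
  have hRR' : R ⊆ R' := by
    intro x hx
    by_contra hxR'
    have : x ∈ P \ R := hsub (Or.inl ⟨h1 hx, hxR'⟩)
    exact this.2 hx
  -- strict
  have hne : R ≠ R' := by
    intro heq
    apply hss.2
    subst heq
    intro x hx
    exact Or.inl hx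
  exact h3 R' ⟨hRR', fun h => hne (Set.Subset.antisymm hRR' h)⟩ hR'P
end

section
/- Let * be an slp-revision function for P. Then * satisfies Removal Relevance: if R ≠ ∅ and R ⊆ P \ (P * Q), then (P * Q) ∪ R is inconsistent. -/
variable {α : Type*}

def compat (Cons : Set α → Prop) (P Q : Set α) : Set (Set α) :=
  {R | Cons (R ∪ Q) ∧ ∀ R' : Set α, sd P R' ⊂ sd P R → ¬ Cons (R' ∪ Q)}

theorem stmt7 (Cons : Set α → Prop) (P : Set α)
    (γ : Set (Set α) → Set α) (star : Set α → Set α → Set α)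
    (hsel : ∀ Q : Set α, (compat Cons P Q).Nonempty →
      γ (compat Cons P Q) ∈ compat Cons P Q)
    (hsel' : ∀ Q : Set α, ¬ (compat Cons P Q).Nonempty → γ (compat Cons P Q) = P)
    (hstar : ∀ Q : Set α, star P Q = γ (compat Cons P Q) ∪ Q) :
    ∀ Q R : Set α, R ≠ ∅ → R ⊆ P \ star P Q → ¬ Cons (star P Q ∪ R) := by
  intro Q R hR hRsub
  obtain ⟨r, hr⟩ := Set.nonempty_iff_ne_empty.mpr hR
  by_cases hne : (compat Cons P Q).Nonempty
  · obtain ⟨hcons, hmin⟩ := hsel Q hne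
    set X := γ (compat Cons P Q) with hX
    have hRX : R ⊆ P \ (X ∪ Q) := by rwa [← hstar Q]
    have hsub : sd P (X ∪ R) ⊂ sd P X := by
      constructor
      · intro a ha
        rcases ha with ha | ha
        · exact Or.inl ⟨ha.1, fun h => ha.2 (Or.inl h)⟩
        · rcases ha.1 with h | h
          · exact Or.inr ⟨h, ha.2⟩
          · exact absurd ((hRX h).1) ha.2
      · intro hcon
        have hrP := hRX hr
        have : r ∈ sd P X := Or.inl ⟨hrP.1, fun h => hrP.2 (Or.inl h)⟩
        have := hcon this
        rcases this with h | h
        · exact h.2 (Or.inr hr)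
        · exact h.2 hrP.1
    have hnot := hmin (X ∪ R) hsub
    rw [hstar Q]
    intro hc
    apply hnot
    have : X ∪ R ∪ Q = X ∪ Q ∪ R := by
      ext a; simp [or_comm, or_assoc, or_left_comm]
    rwa [this]
  · have hPQ : star P Q = P ∪ Q := by rw [hstar Q, hsel' Q hne]
    have : r ∈ P \ (P ∪ Q) := hPQ ▸ hRsub hr
    exact absurd (Or.inl this.1) this.2
end

section
/- Let * be an slp-revision function for P. Then * satisfies Expansion Relevance: if E ≠ ∅ and E ⊆ (P * Q) \ (P ∪ Q), then (P * Q) \ E is inconsistent. -/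
variable {α : Type*}

theorem stmt8 (Cons : Set α → Prop) (P : Set α)
    (γ : Set (Set α) → Set α) (star : Set α → Set α → Set α)
    (hsel : ∀ Q : Set α, (compat Cons P Q).Nonempty →
      γ (compat Cons P Q) ∈ compat Cons P Q)
    (hsel' : ∀ Q : Set α, ¬ (compat Cons P Q).Nonempty → γ (compat Cons P Q) = P)
    (hstar : ∀ Q : Set α, star P Q = γ (compat Cons P Q) ∪ Q) :
    ∀ Q E : Set α, E ≠ ∅ → E ⊆ star P Q \ (P ∪ Q) → ¬ Cons (star P Q \ E) := by
  intro Q E hE hsub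
  obtain ⟨e, he⟩ := Set.nonempty_iff_ne_empty.2 hE
  by_cases hne : (compat Cons P Q).Nonempty
  · set X := γ (compat Cons P Q) with hX
    obtain ⟨hcons, hmin⟩ := hsel Q hne
    rw [hstar] at hsub ⊢
    -- facts about E
    have hEP : ∀ x ∈ E, x ∉ P := fun x hx => fun h => (hsub hx).2 (Or.inl h)
    have hEQ : ∀ x ∈ E, x ∉ Q := fun x hx => fun h => (hsub hx).2 (Or.inr h)
    have hEX : ∀ x ∈ E, x ∈ X := by
      intro x hx
      rcases (hsub hx).1 with h | h
      · exact h
      · exact absurd h (hEQ x hx)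
    have key : sd P (X \ E) ⊂ sd P X := by
      constructor
      · intro x hx
        rcases hx with h | h
        · exact Or.inl ⟨h.1, fun hxX => h.2 ⟨hxX, fun hxE => hEP x hxE h.1⟩⟩
        · exact Or.inr ⟨h.1.1, h.2⟩
      · intro hcon
        have : e ∈ sd P (X \ E) := hcon (Or.inr ⟨hEX e he, hEP e he⟩)
        rcases this with h | h
        · exact hEP e he h.1
        · exact h.1.2 he
    have hnc := hmin (X \ E) key
    have heq : (X \ E) ∪ Q = (X ∪ Q) \ E := by
      ext x
      constructor
      · rintro (⟨h1, h2⟩ | h)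
        · exact ⟨Or.inl h1, h2⟩
        · exact ⟨Or.inr h, fun hx => hEQ x hx h⟩
      · rintro ⟨h1 | h1, h2⟩
        · exact Or.inl ⟨h1, h2⟩
        · exact Or.inr h1
    rw [← heq]; exact hnc
  · rw [hstar, hsel' Q hne] at hsub
    exact absurd (hsub he).1 (fun h => (hsub he).2 h)
end

section
/- Let * be an slp-revision function for P. Then * satisfies Mixed Relevance: if R ≠ ∅, R ⊆ P \ (P * Q), E ≠ ∅, and E ⊆ (P * Q) \ (P ∪ Q), then ((P * Q) ∪ R) \ E is inconsistent. -/
variable {α : Type*}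

theorem stmt9 (Cons : Set α → Prop) (P : Set α)
    (γ : Set (Set α) → Set α) (star : Set α → Set α → Set α)
    (hsel : ∀ Q : Set α, (compat Cons P Q).Nonempty →
      γ (compat Cons P Q) ∈ compat Cons P Q)
    (hsel' : ∀ Q : Set α, ¬ (compat Cons P Q).Nonempty → γ (compat Cons P Q) = P)
    (hstar : ∀ Q : Set α, star P Q = γ (compat Cons P Q) ∪ Q) :
    ∀ Q R E : Set α, R ≠ ∅ → R ⊆ P \ star P Q →
      E ≠ ∅ → E ⊆ star P Q \ (P ∪ Q) →
      ¬ Cons ((star P Q ∪ R) \ E) := by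
  intro Q R E hR hRsub hE hEsub
  by_cases hne : (compat Cons P Q).Nonempty
  · set X := γ (compat Cons P Q) with hX
    have hmem := hsel Q hne
    obtain ⟨hcons, hmin⟩ := hmem
    have hstarQ : star P Q = X ∪ Q := hstar Q
    rw [hstarQ] at hRsub hEsub ⊢
    obtain ⟨e, he⟩ := Set.nonempty_iff_ne_empty.2 hE
    have heX : e ∈ X := by
      have := hEsub he
      rcases this.1 with h | h
      · exact h
      · exact absurd (Or.inr h) this.2
    have heP : e ∉ P := fun h => (hEsub he).2 (Or.inl h)
    -- key set
    set Y := (X ∪ R) \ E with hY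
    have hsub : sd P Y ⊂ sd P X := by
      constructor
      · rintro a (⟨haP, haY⟩ | ⟨haY, haP⟩)
        · left
          refine ⟨haP, fun haX => haY ⟨Or.inl haX, fun haE => (hEsub haE).2 (Or.inl haP)⟩⟩
        · right
          obtain ⟨haXR, haE⟩ := haY
          rcases haXR with h | h
          · exact ⟨h, haP⟩
          · exact absurd (hRsub h).1 haP
      · intro hcontra
        have : e ∈ sd P Y := hcontra (Or.inr ⟨heX, heP⟩)
        rcases this with ⟨h1, _⟩ | ⟨h1, _⟩
        · exact heP h1
        · exact h1.2 he
    have hnc := hmin Y hsub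
    have heq : ((X ∪ Q) ∪ R) \ E = Y ∪ Q := by
      ext a
      simp only [hY, Set.mem_diff, Set.mem_union]
      constructor
      · rintro ⟨h1, h2⟩
        rcases h1 with (h | h) | h
        · exact Or.inl ⟨Or.inl h, h2⟩
        · exact Or.inr h
        · exact Or.inl ⟨Or.inr h, h2⟩
      · rintro (⟨h, h2⟩ | h)
        · rcases h with h | h
          · exact ⟨Or.inl (Or.inl h), h2⟩
          · exact ⟨Or.inr h, h2⟩
        · exact ⟨Or.inl (Or.inr h), fun haE => (hEsub haE).2 (Or.inr h)⟩
    rw [heq]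
    exact hnc
  · have hγ := hsel' Q hne
    have hstarQ : star P Q = P ∪ Q := by rw [hstar Q, hγ]
    exfalso
    apply hR
    ext r
    simp only [Set.mem_empty_iff_false, iff_false]
    intro hr
    exact (hRsub hr).2 (hstarQ ▸ Or.inl (hRsub hr).1)
end

section
/- Let * be an slp-revision function for P. Then * satisfies Uniformity: if P ↕ Q₁ = P ↕ Q₂ and moreover γ(P ↕ Q₁) = γ(P ↕ Q₂), then P \ (P * Q₁) = P \ (P * Q₂) and (P * Q₁) \ (P ∪ Q₁) = (P * Q₂) \ (P ∪ Q₂). -/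
variable {α : Type*}

lemma compat_inter {Cons : Set α → Prop} {P Q X : Set α}
    (hX : X ∈ compat Cons P Q) : P ∩ Q ⊆ X ∧ X ∩ Q ⊆ P := by
  constructor
  · rintro a ⟨haP, haQ⟩
    by_contra haX
    have hunion : insert a X ∪ Q = X ∪ Q := by
      ext b
      simp only [Set.mem_union, Set.mem_insert_iff]
      constructor
      · rintro ((rfl | h) | h)
        · exact Or.inr haQ
        · exact Or.inl h
        · exact Or.inr h
      · tauto
    have hss : sd P (insert a X) ⊂ sd P X := by
      constructor
      · rintro b (⟨hbP, hbX⟩ | ⟨hbX, hbP⟩)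
        · exact Or.inl ⟨hbP, fun h => hbX (Set.mem_insert_of_mem a h)⟩
        · rcases hbX with rfl | hbX
          · exact absurd haP hbP
          · exact Or.inr ⟨hbX, hbP⟩
      · intro hsub
        have : a ∈ sd P (insert a X) := hsub (Or.inl ⟨haP, haX⟩)
        rcases this with ⟨_, h⟩ | ⟨_, h⟩
        · exact h (Set.mem_insert a X)
        · exact h haP
    exact hX.2 (insert a X) hss (hunion ▸ hX.1)
  · rintro a ⟨haX, haQ⟩
    by_contra haP
    have hunion : (X \ {a}) ∪ Q = X ∪ Q := by
      ext b
      simp only [Set.mem_union, Set.mem_diff, Set.mem_singleton_iff]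
      constructor
      · tauto
      · rintro (h | h)
        · by_cases hb : b = a
          · exact Or.inr (hb ▸ haQ)
          · exact Or.inl ⟨h, hb⟩
        · exact Or.inr h
    have hss : sd P (X \ {a}) ⊂ sd P X := by
      constructor
      · rintro b (⟨hbP, hbX⟩ | ⟨⟨hbX, _⟩, hbP⟩)
        · exact Or.inl ⟨hbP, fun h => hbX ⟨h, fun hb => haP (hb ▸ hbP)⟩⟩
        · exact Or.inr ⟨hbX, hbP⟩
      · intro hsub
        have : a ∈ sd P (X \ {a}) := hsub (Or.inr ⟨haX, haP⟩)
        rcases this with ⟨h, _⟩ | ⟨⟨_, h⟩, _⟩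
        · exact haP h
        · exact h rfl
    exact hX.2 (X \ {a}) hss (hunion ▸ hX.1)

lemma compat_diffs {Cons : Set α → Prop} {P Q X : Set α}
    (hX : X ∈ compat Cons P Q) :
    P \ (X ∪ Q) = P \ X ∧ (X ∪ Q) \ (P ∪ Q) = X \ P := by
  obtain ⟨h1, h2⟩ := compat_inter hX
  constructor
  · ext a
    simp only [Set.mem_diff, Set.mem_union]
    constructor
    · tauto
    · rintro ⟨haP, haX⟩
      exact ⟨haP, fun h => haX (h.elim id (fun hq => h1 ⟨haP, hq⟩))⟩
  · ext a
    simp only [Set.mem_diff, Set.mem_union]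
    constructor
    · rintro ⟨hX', hP'⟩
      push_neg at hP'
      exact ⟨hX'.elim id (fun h => absurd h hP'.2), hP'.1⟩
    · rintro ⟨haX, haP⟩
      refine ⟨Or.inl haX, ?_⟩
      rintro (h | h)
      · exact haP h
      · exact haP (h2 ⟨haX, h⟩)

theorem stmt10 (Cons : Set α → Prop) (P : Set α)
    (γ : Set (Set α) → Set α) (star : Set α → Set α → Set α)
    (hsel : ∀ Q : Set α, (compat Cons P Q).Nonempty →
      γ (compat Cons P Q) ∈ compat Cons P Q)
    (hsel' : ∀ Q : Set α, ¬ (compat Cons P Q).Nonempty → γ (compat Cons P Q) = P)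
    (hstar : ∀ Q : Set α, star P Q = γ (compat Cons P Q) ∪ Q) :
    ∀ Q₁ Q₂ : Set α, compat Cons P Q₁ = compat Cons P Q₂ →
      γ (compat Cons P Q₁) = γ (compat Cons P Q₂) →
      P \ star P Q₁ = P \ star P Q₂ ∧
      star P Q₁ \ (P ∪ Q₁) = star P Q₂ \ (P ∪ Q₂) := by
  intro Q₁ Q₂ hcompat hγ
  rw [hstar Q₁, hstar Q₂, ← hγ]
  set X := γ (compat Cons P Q₁) with hXdef
  by_cases hne : (compat Cons P Q₁).Nonempty
  · have hX1 : X ∈ compat Cons P Q₁ := hsel Q₁ hne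
    have hX2 : X ∈ compat Cons P Q₂ := by
      rw [hγ]; exact hsel Q₂ (hcompat ▸ hne)
    obtain ⟨d1a, d1b⟩ := compat_diffs hX1
    obtain ⟨d2a, d2b⟩ := compat_diffs hX2
    exact ⟨by rw [d1a, d2a], by rw [d1b, d2b]⟩
  · have h1 : X = P := hsel' Q₁ hne
    have h2 : γ (compat Cons P Q₂) = P := hsel' Q₂ (hcompat ▸ hne)
    rw [h1]
    constructor
    · simp [Set.diff_eq_empty.mpr (Set.subset_union_left)]
    · simp
end

section
/- If X is an s-compatible program of P with respect to Q, then P ∩ Q ⊆ X. -/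
variable {α : Type*}

theorem stmt11 (Cons : Set α → Prop) (P Q X : Set α)
    (h1 : Cons (X ∪ Q))
    (h2 : ∀ X' : Set α, sd P X' ⊂ sd P X → ¬ Cons (X' ∪ Q)) :
    P ∩ Q ⊆ X := by
  intro a ha
  by_contra haX
  apply h2 (X ∪ (P ∩ Q)) ?_ ?_
  · constructor
    · intro x hx
      simp only [sd, Set.mem_union, Set.mem_diff, Set.mem_inter_iff] at hx ⊢
      tauto
    · intro hsub
      have : a ∈ sd P X := Or.inl ⟨ha.1, haX⟩
      have h3 := hsub this
      simp only [sd, Set.mem_union, Set.mem_diff, Set.mem_inter_iff] at h3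
      tauto
  · have : X ∪ (P ∩ Q) ∪ Q = X ∪ Q := by
      ext x; simp only [Set.mem_union, Set.mem_inter_iff]; tauto
    rw [this]; exact h1
end

section
/- Let * be a function on programs satisfying Success, Consistency (in the form: P ↕ Q ≠ ∅ → Cons (P * Q)), Removal Relevance, Expansion Relevance, and Mixed Relevance. Define X := ((P * Q) ∩ P) ∪ ((P * Q) \ Q). If P ↕ Q ≠ ∅, then X is an s-compatible program of P with respect to Q, i.e., X ∈ P ↕ Q. -/
variable {α : Type*}

theorem stmt14 (Cons : Set α → Prop) (star : Set α → Set α → Set α) (P Q : Set α)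
    (hsucc : ∀ Q : Set α, Q ⊆ star P Q)
    (hcons : ∀ Q : Set α, (compat Cons P Q).Nonempty → Cons (star P Q))
    (hrr : ∀ Q R : Set α, R ≠ ∅ → R ⊆ P \ star P Q → ¬ Cons (star P Q ∪ R))
    (her : ∀ Q E : Set α, E ≠ ∅ → E ⊆ star P Q \ (P ∪ Q) → ¬ Cons (star P Q \ E))
    (hmr : ∀ Q R E : Set α, R ≠ ∅ → R ⊆ P \ star P Q →
      E ≠ ∅ → E ⊆ star P Q \ (P ∪ Q) → ¬ Cons ((star P Q ∪ R) \ E))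
    (hne : (compat Cons P Q).Nonempty) :
    ((star P Q ∩ P) ∪ (star P Q \ Q)) ∈ compat Cons P Q := by
  set S := star P Q with hS
  clear_value S
  have hQS : Q ⊆ S := hS ▸ hsucc Q
  set X : Set α := (S ∩ P) ∪ (S \ Q) with hX
  clear_value X
  have hXQ : X ∪ Q = S := by
    ext x
    have := @hQS x
    simp only [hX, Set.mem_union, Set.mem_inter_iff, Set.mem_diff]
    by_cases hq : x ∈ Q <;> tauto
  constructor
  · show Cons (X ∪ Q)
    rw [hXQ, hS]
    exact hcons Q hne
  · intro X' hsub
    have h1 : P \ X' ⊆ P \ X := by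
      intro x hx
      have hm : x ∈ sd P X := hsub.subset (Or.inl hx)
      rcases hm with h | h
      · exact h
      · exact absurd h.2 (fun c => c hx.1)
    have h2 : X' \ P ⊆ X \ P := by
      intro x hx
      have hm : x ∈ sd P X := hsub.subset (Or.inr hx)
      rcases hm with h | h
      · exact absurd h.1 hx.2
      · exact h
    set R : Set α := (P \ X) \ (P \ X') with hRdef
    set E : Set α := (X \ P) \ X' with hEdef
    have hPX : P \ X = P \ S := by
      ext x
      simp only [hX, Set.mem_diff, Set.mem_union, Set.mem_inter_iff]
      tauto
    have hR : R ⊆ P \ S := by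
      rw [hRdef, hPX]; exact Set.diff_subset
    have hE : E ⊆ S \ (P ∪ Q) := by
      intro x hx
      have hxd := hx.1
      simp only [hX, Set.mem_diff, Set.mem_union, Set.mem_inter_iff] at hxd ⊢
      tauto
    have key : X' ∪ Q = (S ∪ R) \ E := by
      clear hsucc hcons hrr her hmr hne hsub hXQ hPX hR hE
      ext x
      have hqs := @hQS x
      have h1x := @h1 x
      have h2x := @h2 x
      simp only [hRdef, hEdef, hX, Set.mem_union, Set.mem_diff, Set.mem_inter_iff]
        at h1x h2x ⊢
      clear_value R E
      clear hRdef hEdef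
      by_cases hp : x ∈ P <;> by_cases hs : x ∈ S <;> by_cases hq : x ∈ Q <;>
        by_cases hx' : x ∈ X' <;> simp_all
    show ¬ Cons (X' ∪ Q)
    rw [key]
    by_cases hRe : R = ∅
    · by_cases hEe : E = ∅
      · exfalso
        obtain ⟨x, hx1, hx2⟩ := Set.exists_of_ssubset hsub
        rcases hx1 with h | h
        · have : x ∈ R := ⟨h, fun c => hx2 (Or.inl c)⟩
          rw [hRe] at this; exact this
        · have hxE : x ∈ E := ⟨h, fun c => hx2 (Or.inr ⟨c, h.2⟩)⟩
          rw [hEe] at hxE; exact hxE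
      · rw [hRe, Set.union_empty, hS]
        exact her Q E hEe (hS ▸ hE)
    · by_cases hEe : E = ∅
      · rw [hEe, Set.diff_empty, hS]
        exact hrr Q R hRe (hS ▸ hR)
      · rw [hS]
        exact hmr Q R E hRe (hS ▸ hR) hEe (hS ▸ hE)
end

section
/- Let γ be defined from a function * by γ(P ↕ Q) := ((P * Q) ∩ P) ∪ ((P * Q) \ Q), and suppose * satisfies Uniformity: P ↕ Q₁ = P ↕ Q₂ implies P \ (P * Q₁) = P \ (P * Q₂) and (P * Q₁) \ (P ∪ Q₁) = (P * Q₂) \ (P ∪ Q₂). Then γ is well-defined as a function of the set P ↕ Q: if P ↕ Q₁ = P ↕ Q₂ then ((P * Q₁) ∩ P) ∪ ((P * Q₁) \ Q₁) = ((P * Q₂) ∩ P) ∪ ((P * Q₂) \ Q₂). -/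
variable {α : Type*}

theorem stmt16 (star : Set α → Set α → Set α)
    (C : Set α → Set α → Set (Set α)) (P Q₁ Q₂ : Set α)
    (hunif : ∀ Q₁ Q₂ : Set α, C P Q₁ = C P Q₂ →
      P \ star P Q₁ = P \ star P Q₂ ∧
      star P Q₁ \ (P ∪ Q₁) = star P Q₂ \ (P ∪ Q₂))
    (h : C P Q₁ = C P Q₂) :
    (star P Q₁ ∩ P) ∪ (star P Q₁ \ Q₁) = (star P Q₂ ∩ P) ∪ (star P Q₂ \ Q₂) := by
  obtain ⟨h1, h2⟩ := hunif Q₁ Q₂ h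
  ext x
  have e1 := Set.ext_iff.mp h1 x
  have e2 := Set.ext_iff.mp h2 x
  simp only [Set.mem_diff, Set.mem_union, Set.mem_inter_iff] at *
  tauto
end

section
/- Representation theorem (abstract form): A function * : Set α → Set α → Set α arises as an slp-revision function, i.e., there is a selection function γ for P with P * Q = γ(P ↕ Q) ∪ Q for all Q, if and only if * satisfies: (i) Success: Q ⊆ P * Q; (ii) Consistency: P ↕ Q ≠ ∅ → Cons (P * Q); (iii) Failure: P ↕ Q = ∅ → P * Q = P ∪ Q; (iv) Removal Relevance; (v) Expansion Relevance; (vi) Mixed Relevance; (vii) Uniformity. -/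
variable {α : Type*}

lemma mem_sd {x : α} {P A : Set α} :
    x ∈ sd P A ↔ (x ∈ P ∧ x ∉ A) ∨ (x ∈ A ∧ x ∉ P) := by
  simp [sd, Set.mem_union, Set.mem_diff]

lemma sd_shrink (P G R E : Set α) (hR : R ⊆ P \ G) (hE : E ⊆ G \ P) :
    sd P ((G ∪ R) \ E) = sd P G \ (R ∪ E) := by
  ext x
  have h1 : x ∈ R → x ∈ P ∧ x ∉ G := fun h => hR h
  have h2 : x ∈ E → x ∈ G ∧ x ∉ P := fun h => hE h
  simp only [mem_sd, Set.mem_diff, Set.mem_union]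
  tauto

lemma sd_shrink_ss (P G R E : Set α) (hR : R ⊆ P \ G) (hE : E ⊆ G \ P)
    (hne : (R ∪ E).Nonempty) : sd P ((G ∪ R) \ E) ⊂ sd P G := by
  rw [sd_shrink P G R E hR hE]
  refine sdiff_lt ?_ (Set.nonempty_iff_ne_empty.mp hne)
  intro x hx
  rcases hx with hx | hx
  · exact mem_sd.mpr (Or.inl ⟨(hR hx).1, (hR hx).2⟩)
  · exact mem_sd.mpr (Or.inr ⟨(hE hx).1, (hE hx).2⟩)

lemma compat_Q_iff {Cons : Set α → Prop} {P Q G : Set α} (hG : G ∈ compat Cons P Q)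
    {x : α} (hxQ : x ∈ Q) : x ∈ P ↔ x ∈ G := by
  constructor <;> intro hx <;> by_contra hG'
  · have hss : sd P ((G ∪ {x}) \ ∅) ⊂ sd P G :=
      sd_shrink_ss P G {x} ∅ (by simp [hx, hG']) (by simp) (by simp)
    rw [Set.diff_empty] at hss
    refine hG.2 (G ∪ {x}) hss ?_
    have he : (G ∪ {x}) ∪ Q = G ∪ Q := by
      ext y
      by_cases hy : y = x <;> simp [hy, hxQ]
    rw [he]; exact hG.1
  · have hss : sd P ((G ∪ ∅) \ {x}) ⊂ sd P G :=
      sd_shrink_ss P G ∅ {x} (by simp) (by simp [hx, hG']) (by simp)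
    rw [Set.union_empty] at hss
    refine hG.2 (G \ {x}) hss ?_
    have he : (G \ {x}) ∪ Q = G ∪ Q := by
      ext y
      by_cases hy : y = x <;> simp [hy, hxQ]
    rw [he]; exact hG.1

def Nwit (star : Set α → Set α → Set α) (P Q : Set α) : Set α :=
  (star P Q ∩ P) ∪ (star P Q \ (P ∪ Q))

lemma Nwit_union {star : Set α → Set α → Set α} {P Q : Set α} (hQ : Q ⊆ star P Q) :
    Nwit star P Q ∪ Q = star P Q := by
  ext x
  have h := @hQ x
  simp only [Nwit, Set.mem_union, Set.mem_inter_iff, Set.mem_diff]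
  tauto

lemma sd_Nwit {star : Set α → Set α → Set α} {P Q : Set α} :
    sd P (Nwit star P Q) = (P \ star P Q) ∪ (star P Q \ (P ∪ Q)) := by
  ext x
  simp only [mem_sd, Nwit, Set.mem_union, Set.mem_inter_iff, Set.mem_diff]
  tauto

lemma Nwit_mem {Cons : Set α → Prop} {star : Set α → Set α → Set α} {P : Set α}
    (hSuc : ∀ Q : Set α, Q ⊆ star P Q)
    (hCon : ∀ Q : Set α, (compat Cons P Q).Nonempty → Cons (star P Q))
    (hRem : ∀ Q R : Set α, R ≠ ∅ → R ⊆ P \ star P Q → ¬ Cons (star P Q ∪ R))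
    (hExp : ∀ Q E : Set α, E ≠ ∅ → E ⊆ star P Q \ (P ∪ Q) → ¬ Cons (star P Q \ E))
    (hMix : ∀ Q R E : Set α, R ≠ ∅ → R ⊆ P \ star P Q →
        E ≠ ∅ → E ⊆ star P Q \ (P ∪ Q) → ¬ Cons ((star P Q ∪ R) \ E))
    (Q : Set α) (hne : (compat Cons P Q).Nonempty) :
    Nwit star P Q ∈ compat Cons P Q := by
  constructor
  · rw [Nwit_union (hSuc Q)]
    exact hCon Q hne
  · intro R' hss hc
    set S := star P Q with hS
    set R : Set α := R' ∩ (P \ S) with hRdef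
    set E : Set α := (S \ (P ∪ Q)) \ R' with hEdef
    have hsub : ∀ x : α, x ∈ sd P R' → x ∈ (P \ S) ∪ (S \ (P ∪ Q)) := by
      intro x hx
      have := hss.subset hx
      rwa [sd_Nwit] at this
    have c1 : sd P R' = sd P (Nwit star P Q) \ (R ∪ E) := by
      ext x
      have h := hsub x
      simp only [mem_sd, sd_Nwit, hRdef, hEdef, Set.mem_diff, Set.mem_union,
        Set.mem_inter_iff] at h ⊢
      tauto
    have c2 : (R ∪ E).Nonempty := by
      obtain ⟨x, hx1, hx2⟩ := Set.exists_of_ssubset hss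
      rw [c1] at hx2
      simp only [Set.mem_diff, not_and, not_not] at hx2
      exact ⟨x, hx2 hx1⟩
    have c3 : R' ∪ Q = (S ∪ R) \ E := by
      ext x
      have h := hsub x
      have hq : x ∈ Q → x ∈ S := fun hx => hSuc Q hx
      simp only [mem_sd, hRdef, hEdef, Set.mem_diff, Set.mem_union,
        Set.mem_inter_iff] at h ⊢
      tauto
    have hRsub : R ⊆ P \ S := Set.inter_subset_right
    have hEsub : E ⊆ S \ (P ∪ Q) := Set.diff_subset
    rcases Set.eq_empty_or_nonempty R with hR0 | hRne
    · have hEne : E.Nonempty := by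
        rcases c2 with ⟨x, hx⟩
        rcases hx with hx | hx
        · rw [hR0] at hx; exact absurd hx (Set.notMem_empty x)
        · exact ⟨x, hx⟩
      rw [hR0, Set.union_empty] at c3
      exact hExp Q E (Set.nonempty_iff_ne_empty.mp hEne) hEsub (c3 ▸ hc)
    · rcases Set.eq_empty_or_nonempty E with hE0 | hEne
      · rw [hE0, Set.diff_empty] at c3
        exact hRem Q R (Set.nonempty_iff_ne_empty.mp hRne) hRsub (c3 ▸ hc)
      · exact hMix Q R E (Set.nonempty_iff_ne_empty.mp hRne) hRsub
          (Set.nonempty_iff_ne_empty.mp hEne) hEsub (c3 ▸ hc)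

theorem stmt18 (Cons : Set α → Prop) (star : Set α → Set α → Set α) (P : Set α) :
    (∃ γ : Set (Set α) → Set α,
      (∀ Q : Set α, (compat Cons P Q).Nonempty →
        γ (compat Cons P Q) ∈ compat Cons P Q) ∧
      (∀ Q : Set α, ¬ (compat Cons P Q).Nonempty → γ (compat Cons P Q) = P) ∧
      (∀ Q : Set α, star P Q = γ (compat Cons P Q) ∪ Q)) ↔
    ((∀ Q : Set α, Q ⊆ star P Q) ∧
     (∀ Q : Set α, (compat Cons P Q).Nonempty → Cons (star P Q)) ∧
     (∀ Q : Set α, compat Cons P Q = ∅ → star P Q = P ∪ Q) ∧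
     (∀ Q R : Set α, R ≠ ∅ → R ⊆ P \ star P Q → ¬ Cons (star P Q ∪ R)) ∧
     (∀ Q E : Set α, E ≠ ∅ → E ⊆ star P Q \ (P ∪ Q) → ¬ Cons (star P Q \ E)) ∧
     (∀ Q R E : Set α, R ≠ ∅ → R ⊆ P \ star P Q →
        E ≠ ∅ → E ⊆ star P Q \ (P ∪ Q) → ¬ Cons ((star P Q ∪ R) \ E)) ∧
     (∀ Q₁ Q₂ : Set α, compat Cons P Q₁ = compat Cons P Q₂ →
        P \ star P Q₁ = P \ star P Q₂ ∧
        star P Q₁ \ (P ∪ Q₁) = star P Q₂ \ (P ∪ Q₂))) := by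
  classical
  constructor
  · rintro ⟨γ, hγ1, hγ2, hγ3⟩
    refine ⟨?_, ?_, ?_, ?_, ?_, ?_, ?_⟩
    · intro Q; rw [hγ3 Q]; exact Set.subset_union_right
    · intro Q hne; rw [hγ3 Q]
      exact (hγ1 Q hne).1
    · intro Q h
      rw [hγ3 Q, hγ2 Q (by simp [h])]
    · -- Removal relevance
      intro Q R hRne hRsub hc
      by_cases hne : (compat Cons P Q).Nonempty
      · set G := γ (compat Cons P Q) with hGdef
        have hG := hγ1 Q hne
        rw [hγ3 Q, ← hGdef] at hRsub hc
        have hR' : R ⊆ P \ G := fun x hx => ⟨(hRsub hx).1, fun h => (hRsub hx).2 (Or.inl h)⟩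
        have hss : sd P ((G ∪ R) \ ∅) ⊂ sd P G :=
          sd_shrink_ss P G R ∅ hR' (by simp)
            (by rw [Set.union_empty]; exact Set.nonempty_iff_ne_empty.mpr hRne)
        rw [Set.diff_empty] at hss
        refine hG.2 (G ∪ R) hss ?_
        have he : (G ∪ R) ∪ Q = (G ∪ Q) ∪ R := by
          rw [Set.union_assoc, Set.union_assoc, Set.union_comm R Q]
        rwa [he]
      · rw [hγ3 Q, hγ2 Q hne] at hRsub
        refine hRne (Set.eq_empty_iff_forall_notMem.mpr fun x hx => ?_)
        exact (hRsub hx).2 (Or.inl (hRsub hx).1)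
    · -- Expansion relevance
      intro Q E hEne hEsub hc
      by_cases hne : (compat Cons P Q).Nonempty
      · set G := γ (compat Cons P Q) with hGdef
        have hG := hγ1 Q hne
        rw [hγ3 Q, ← hGdef] at hEsub hc
        have hE' : E ⊆ G \ P := by
          intro x hx
          have h1 := hEsub hx
          rcases h1.1 with h | h
          · exact ⟨h, fun hp => h1.2 (Or.inl hp)⟩
          · exact absurd (Or.inr h) h1.2
        have hss : sd P ((G ∪ ∅) \ E) ⊂ sd P G :=
          sd_shrink_ss P G ∅ E (by simp) hE'
            (by rw [Set.empty_union]; exact Set.nonempty_iff_ne_empty.mpr hEne)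
        rw [Set.union_empty] at hss
        refine hG.2 (G \ E) hss ?_
        have he : (G \ E) ∪ Q = (G ∪ Q) \ E := by
          ext x
          have h : x ∈ E → x ∈ G ∧ x ∉ P ∧ x ∉ Q := by
            intro hx
            exact ⟨(hE' hx).1, (hE' hx).2, fun hq => (hEsub hx).2 (Or.inr hq)⟩
          simp only [Set.mem_union, Set.mem_diff]
          tauto
        rwa [he]
      · rw [hγ3 Q, hγ2 Q hne] at hEsub
        refine hEne (Set.eq_empty_iff_forall_notMem.mpr fun x hx => ?_)
        exact (hEsub hx).2 (hEsub hx).1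
    · -- Mixed relevance
      intro Q R E hRne hRsub hEne hEsub hc
      by_cases hne : (compat Cons P Q).Nonempty
      · set G := γ (compat Cons P Q) with hGdef
        have hG := hγ1 Q hne
        rw [hγ3 Q, ← hGdef] at hRsub hEsub hc
        have hR' : R ⊆ P \ G := fun x hx => ⟨(hRsub hx).1, fun h => (hRsub hx).2 (Or.inl h)⟩
        have hE' : E ⊆ G \ P := by
          intro x hx
          have h1 := hEsub hx
          rcases h1.1 with h | h
          · exact ⟨h, fun hp => h1.2 (Or.inl hp)⟩
          · exact absurd (Or.inr h) h1.2
        have hss : sd P ((G ∪ R) \ E) ⊂ sd P G :=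
          sd_shrink_ss P G R E hR' hE'
            ⟨(Set.nonempty_iff_ne_empty.mpr hRne).choose,
              Or.inl (Set.nonempty_iff_ne_empty.mpr hRne).choose_spec⟩
        refine hG.2 ((G ∪ R) \ E) hss ?_
        have he : ((G ∪ R) \ E) ∪ Q = ((G ∪ Q) ∪ R) \ E := by
          ext x
          have h1 : x ∈ E → x ∈ G ∧ x ∉ P ∧ x ∉ Q := by
            intro hx
            exact ⟨(hE' hx).1, (hE' hx).2, fun hq => (hEsub hx).2 (Or.inr hq)⟩
          have h2 : x ∈ R → x ∈ P := fun hx => (hR' hx).1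
          simp only [Set.mem_union, Set.mem_diff]
          tauto
        rwa [he]
      · rw [hγ3 Q, hγ2 Q hne] at hRsub
        refine hRne (Set.eq_empty_iff_forall_notMem.mpr fun x hx => ?_)
        exact (hRsub hx).2 (Or.inl (hRsub hx).1)
    · -- Uniformity
      intro Q₁ Q₂ hQ
      by_cases hne : (compat Cons P Q₁).Nonempty
      · set G := γ (compat Cons P Q₁) with hGdef
        have hG1 : G ∈ compat Cons P Q₁ := hγ1 Q₁ hne
        have hG2 : G ∈ compat Cons P Q₂ := by
          have hne2 : (compat Cons P Q₂).Nonempty := hQ ▸ hne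
          have := hγ1 Q₂ hne2
          rw [hGdef, hQ]
          exact this
        have hs1 : star P Q₁ = G ∪ Q₁ := hγ3 Q₁
        have hs2 : star P Q₂ = G ∪ Q₂ := by
          rw [hγ3 Q₂, hGdef, hQ]
        constructor
        · ext x
          have k1 : x ∈ Q₁ → (x ∈ P ↔ x ∈ G) := fun h => compat_Q_iff hG1 h
          have k2 : x ∈ Q₂ → (x ∈ P ↔ x ∈ G) := fun h => compat_Q_iff hG2 h
          simp only [hs1, hs2, Set.mem_diff, Set.mem_union]
          tauto
        · ext x
          have k1 : x ∈ Q₁ → (x ∈ P ↔ x ∈ G) := fun h => compat_Q_iff hG1 h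
          have k2 : x ∈ Q₂ → (x ∈ P ↔ x ∈ G) := fun h => compat_Q_iff hG2 h
          simp only [hs1, hs2, Set.mem_diff, Set.mem_union]
          tauto
      · have hne2 : ¬ (compat Cons P Q₂).Nonempty := hQ ▸ hne
        have hs1 : star P Q₁ = P ∪ Q₁ := by rw [hγ3 Q₁, hγ2 Q₁ hne]
        have hs2 : star P Q₂ = P ∪ Q₂ := by rw [hγ3 Q₂, hγ2 Q₂ hne2]
        rw [hs1, hs2]
        constructor
        · ext x
          simp only [Set.mem_diff, Set.mem_union]
          tauto
        · ext x
          simp only [Set.mem_diff, Set.mem_union]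
          tauto
  · rintro ⟨hSuc, hCon, hFail, hRem, hExp, hMix, hUni⟩
    refine ⟨fun S =>
      if h : ∃ Q : Set α, compat Cons P Q = S ∧ (compat Cons P Q).Nonempty
      then Nwit star P h.choose else P, ?_, ?_, ?_⟩
    · intro Q hne
      have hex : ∃ Q' : Set α, compat Cons P Q' = compat Cons P Q ∧
          (compat Cons P Q').Nonempty := ⟨Q, rfl, hne⟩
      beta_reduce
      rw [dif_pos hex]
      obtain ⟨h1, h2⟩ := hex.choose_spec
      have := Nwit_mem hSuc hCon hRem hExp hMix _ h2
      rwa [h1] at this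
    · intro Q hne
      beta_reduce
      rw [dif_neg]
      rintro ⟨Q', hQ', hne'⟩
      exact hne (hQ' ▸ hne')
    · intro Q
      by_cases hne : (compat Cons P Q).Nonempty
      · have hex : ∃ Q' : Set α, compat Cons P Q' = compat Cons P Q ∧
            (compat Cons P Q').Nonempty := ⟨Q, rfl, hne⟩
        beta_reduce
        rw [dif_pos hex]
        obtain ⟨h1, h2⟩ := hex.choose_spec
        have huni := hUni hex.choose Q h1
        have hNeq : Nwit star P hex.choose = Nwit star P Q := by
          unfold Nwit
          rw [huni.2]
          congr 1
          ext x
          have h := Set.ext_iff.mp huni.1 x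
          simp only [Set.mem_diff, Set.mem_inter_iff] at h ⊢
          tauto
        rw [hNeq, Nwit_union (hSuc Q)]
      · beta_reduce
        rw [dif_neg]
        · exact hFail Q (Set.not_nonempty_iff_eq_empty.mp hne)
        · rintro ⟨Q', hQ', hne'⟩
          exact hne (hQ' ▸ hne')
end

section
/- If X is an s-compatible program of P with respect to Q and R is a nonempty subset of P disjoint from X, then (X ∪ R) ∪ Q is inconsistent; dually, if E is a nonempty subset of X disjoint from P, then (X \ E) ∪ Q is inconsistent. -/
variable {α : Type*}

theorem stmt19 (Cons : Set α → Prop) (P Q X : Set α)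
    (h1 : Cons (X ∪ Q))
    (h2 : ∀ X' : Set α, sd P X' ⊂ sd P X → ¬ Cons (X' ∪ Q)) :
    (∀ R : Set α, R ≠ ∅ → R ⊆ P → R ∩ X = ∅ → ¬ Cons ((X ∪ R) ∪ Q)) ∧
    (∀ E : Set α, E ≠ ∅ → E ⊆ X → E ∩ P = ∅ → ¬ Cons ((X \ E) ∪ Q)) := by
  constructor
  · intro R hne hRP hRX
    apply h2
    obtain ⟨a, ha⟩ := Set.nonempty_iff_ne_empty.mpr hne
    have haX : a ∉ X := fun hx => (Set.eq_empty_iff_forall_notMem.mp hRX a) ⟨ha, hx⟩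
    constructor
    · rintro x (⟨hxP, hx⟩ | ⟨hx, hxP⟩)
      · exact Or.inl ⟨hxP, fun h => hx (Or.inl h)⟩
      · rcases hx with hx | hx
        · exact Or.inr ⟨hx, hxP⟩
        · exact absurd (hRP hx) hxP
    · intro hsub
      have : a ∈ sd P (X ∪ R) := hsub (Or.inl ⟨hRP ha, haX⟩)
      rcases this with ⟨_, h⟩ | ⟨_, h⟩
      · exact h (Or.inr ha)
      · exact h (hRP ha)
  · intro E hne hEX hEP
    apply h2
    obtain ⟨a, ha⟩ := Set.nonempty_iff_ne_empty.mpr hne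
    have haP : a ∉ P := fun hp => (Set.eq_empty_iff_forall_notMem.mp hEP a) ⟨ha, hp⟩
    constructor
    · rintro x (⟨hxP, hx⟩ | ⟨⟨hx, _⟩, hxP⟩)
      · exact Or.inl ⟨hxP, fun h => hx ⟨h, fun he => (Set.eq_empty_iff_forall_notMem.mp hEP x) ⟨he, hxP⟩⟩⟩
      · exact Or.inr ⟨hx, hxP⟩
    · intro hsub
      have : a ∈ sd P (X \ E) := hsub (Or.inr ⟨hEX ha, haP⟩)
      rcases this with ⟨h, _⟩ | ⟨⟨_, h⟩, _⟩
      · exact haP h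
      · exact h ha
end
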